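/- arXiv:1811.08580 — 5 statements merged into one kernel-verified Lean document; each statement's English description precedes it below -/
import Mathlib

section
/- If P and Q are orthogonal projections on a finite-dimensional complex Hilbert space satisfying PQP = α²P and QPQ = β²Q for some scalars α, β > 0, then α = β. -/
/-- If `P` and `Q` are nonzero orthogonal projections on a finite-dimensional complex
Hilbert space satisfying `PQP = α²P` and `QPQ = β²Q` with `α, β > 0`, then `α = β`. -/
theorem stmt_0 {n : ℕ} (P Q : Matrix (Fin n) (Fin n) ℂ)
    (hP : P.IsHermitian) (hP2 : P * P = P)
    (hQ : Q.IsHermitian) (hQ2 : Q * Q = Q)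
    (hP0 : P ≠ 0) (hQ0 : Q ≠ 0)
    (α β : ℝ) (hα : 0 < α) (hβ : 0 < β)
    (hPQP : P * Q * P = ((α : ℂ)^2) • P)
    (hQPQ : Q * P * Q = ((β : ℂ)^2) • Q) :
    α = β := by
  have hPQ : P * Q ≠ 0 := by
    intro h
    apply hP0
    have : P * Q * P = 0 := by rw [h, Matrix.zero_mul]
    rw [hPQP] at this
    have hα2 : ((α : ℂ)^2) ≠ 0 :=
      pow_ne_zero 2 (Complex.ofReal_ne_zero.mpr (ne_of_gt hα))
    exact (smul_eq_zero.mp this).resolve_left hα2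
  have key : ((α : ℂ)^2) • (P * Q) = ((β : ℂ)^2) • (P * Q) := by
    have h1 : P * Q * P * Q = ((α : ℂ)^2) • (P * Q) := by
      rw [hPQP, Matrix.smul_mul]
    have h2 : P * Q * P * Q = ((β : ℂ)^2) • (P * Q) := by
      calc P * Q * P * Q = P * (Q * P * Q) := by
            simp [Matrix.mul_assoc]
        _ = ((β : ℂ)^2) • (P * Q) := by rw [hQPQ, Matrix.mul_smul]
    rw [← h1, h2]
  have hsq : ((α : ℂ)^2) = ((β : ℂ)^2) := by
    by_contra h
    apply hPQ
    have := sub_eq_zero.mpr key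
    rw [← sub_smul] at this
    exact (smul_eq_zero.mp this).resolve_left (sub_ne_zero.mpr h)
  have hr : α^2 = β^2 := by exact_mod_cast hsq
  nlinarith
end

section
/- Let Q be the projection onto a subspace of ℂⁿ and P another projection with PQP = α²P and QPQ = α²Q for some 0 < α ≤ 1. Then P and Q have the same rank. -/
private lemma rank_smul_aux {n : ℕ} (c : ℂ) (hc : c ≠ 0) (A : Matrix (Fin n) (Fin n) ℂ) :
    (c • A).rank = A.rank := by
  apply le_antisymm
  · have : c • A = (c • (1 : Matrix (Fin n) (Fin n) ℂ)) * A := by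
      rw [Matrix.smul_mul, one_mul]
    rw [this]
    exact Matrix.rank_mul_le_right _ _
  · have : A = (c⁻¹ • (1 : Matrix (Fin n) (Fin n) ℂ)) * (c • A) := by
      rw [Matrix.smul_mul, one_mul, smul_smul, inv_mul_cancel₀ hc, one_smul]
    conv_lhs => rw [this]
    exact Matrix.rank_mul_le_right _ _

/-- If `P` and `Q` are orthogonal projections on `ℂⁿ` with `PQP = α²P` and `QPQ = α²Q`
for some `0 < α ≤ 1`, then `P` and `Q` have the same rank. -/
theorem stmt_1 {n : ℕ} (P Q : Matrix (Fin n) (Fin n) ℂ)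
    (hP : P.IsHermitian) (hP2 : P * P = P)
    (hQ : Q.IsHermitian) (hQ2 : Q * Q = Q)
    (α : ℝ) (hα : 0 < α) (hα1 : α ≤ 1)
    (hPQP : P * Q * P = ((α : ℂ)^2) • P)
    (hQPQ : Q * P * Q = ((α : ℂ)^2) • Q) :
    P.rank = Q.rank := by
  have hne : ((α : ℂ)^2) ≠ 0 := by
    simp [pow_eq_zero_iff, Complex.ofReal_eq_zero, hα.ne']
  have h1 : P.rank ≤ Q.rank := by
    calc P.rank = (((α : ℂ)^2) • P).rank := (rank_smul_aux _ hne _).symm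
    _ = (P * Q * P).rank := by rw [hPQP]
    _ ≤ (P * Q).rank := Matrix.rank_mul_le_left _ _
    _ ≤ Q.rank := Matrix.rank_mul_le_right _ _
  have h2 : Q.rank ≤ P.rank := by
    calc Q.rank = (((α : ℂ)^2) • Q).rank := (rank_smul_aux _ hne _).symm
    _ = (Q * P * Q).rank := by rw [hQPQ]
    _ ≤ (Q * P).rank := Matrix.rank_mul_le_left _ _
    _ ≤ P.rank := Matrix.rank_mul_le_right _ _
  exact le_antisymm h1 h2
end

section
/- Let P, Q be orthogonal projections on ℂⁿ such that P, Q are equiangular (PQP = α²P, QPQ = α²Q with 0 < α < 1) and also I−P, I−Q are equiangular. Then the common rank d of P and Q equals n/2. -/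
lemma trace_eq_rank_of_idem {n : ℕ} (A : Matrix (Fin n) (Fin n) ℂ) (h : A * A = A) :
    A.trace = (A.rank : ℂ) := by
  have hf : A.mulVecLin ∘ₗ A.mulVecLin = A.mulVecLin := by
    rw [← Matrix.mulVecLin_mul, h]
  have hproj : LinearMap.IsProj (LinearMap.range A.mulVecLin) A.mulVecLin := by
    refine ⟨fun x => LinearMap.mem_range_self _ x, ?_⟩
    rintro x ⟨y, rfl⟩
    exact congrFun (congrArg DFunLike.coe hf) y
  have ht := hproj.trace
  rw [Matrix.rank, ← ht]
  rw [LinearMap.trace_eq_matrix_trace ℂ (Pi.basisFun ℂ (Fin n)),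
    LinearMap.toMatrix_eq_toMatrix', ← Matrix.toLin'_apply', LinearMap.toMatrix'_toLin']



/-- If `P, Q` are orthogonal projections on `ℂⁿ` which are equiangular
(`PQP = α²P`, `QPQ = α²Q`, `0 < α < 1`) and whose complements `I−P, I−Q` are also
equiangular, then the common rank of `P` and `Q` equals `n/2`. -/
theorem stmt_5 {n : ℕ} (P Q : Matrix (Fin n) (Fin n) ℂ)
    (hP : P.IsHermitian) (hP2 : P * P = P)
    (hQ : Q.IsHermitian) (hQ2 : Q * Q = Q)
    (α : ℝ) (hα : 0 < α) (hα1 : α < 1)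
    (hPQP : P * Q * P = ((α : ℂ)^2) • P)
    (hQPQ : Q * P * Q = ((α : ℂ)^2) • Q)
    (γ : ℝ) (hγ : 0 < γ) (hγ1 : γ < 1)
    (hPQPc : (1 - P) * (1 - Q) * (1 - P) = ((γ : ℂ)^2) • (1 - P))
    (hQPQc : (1 - Q) * (1 - P) * (1 - Q) = ((γ : ℂ)^2) • (1 - Q)) :
    2 * P.rank = n ∧ 2 * Q.rank = n := by
  have hp : P.trace = (P.rank : ℂ) := trace_eq_rank_of_idem P hP2
  have hq : Q.trace = (Q.rank : ℂ) := trace_eq_rank_of_idem Q hQ2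
  have hα2 : ((α : ℂ))^2 ≠ 0 := pow_ne_zero _ (Complex.ofReal_ne_zero.mpr hα.ne')
  -- trace (P*Q) = α² trace P = α² trace Q
  have h1 : (P * Q).trace = ((α : ℂ))^2 * P.trace := by
    have := congrArg Matrix.trace hPQP
    rwa [Matrix.trace_mul_cycle, hP2, Matrix.trace_smul, smul_eq_mul] at this
  have h2 : (P * Q).trace = ((α : ℂ))^2 * Q.trace := by
    have := congrArg Matrix.trace hQPQ
    rwa [Matrix.trace_mul_cycle, hQ2, Matrix.trace_smul, smul_eq_mul,
      Matrix.trace_mul_comm] at this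
  have hpq : Q.trace = P.trace := mul_left_cancel₀ hα2 (h2 ▸ h1)
  -- equation of degree 2
  have h5 : (1 - P) * (1 - Q) * (1 - P) * (1 - Q)
      = ((γ : ℂ)^2) • ((1 - P) * (1 - Q)) := by
    rw [hPQPc, smul_mul_assoc]
  have exp2 : (1 - P) * (1 - Q) * (1 - P) * (1 - Q)
      = 1 - P - P - Q - Q + P * Q + P * Q + P * Q + Q * P + P * P + Q * Q
        - P * P * Q - Q * P * Q - P * Q * P - P * Q * Q + P * Q * P * Q := by
    noncomm_ring
  rw [hP2, hQ2, mul_assoc P Q Q, hQ2, hQPQ, hPQP, smul_mul_assoc] at exp2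
  rw [exp2] at h5
  have expS : (1 - P) * (1 - Q) = 1 - P - Q + P * Q := by noncomm_ring
  rw [expS] at h5
  have E2 := congrArg Matrix.trace h5
  simp only [Matrix.trace_sub, Matrix.trace_add, Matrix.trace_smul, Matrix.trace_one,
    smul_eq_mul, Matrix.trace_mul_comm Q P] at E2
  rw [h1, hpq, hp] at E2
  -- first trace equation
  have exp1 : (1 - P) * (1 - Q) * (1 - P)
      = 1 - P - P - Q + P * P + P * Q + Q * P - P * Q * P := by noncomm_ring
  rw [hP2, hPQP] at exp1
  rw [exp1] at hPQPc
  have E1 := congrArg Matrix.trace hPQPc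
  simp only [Matrix.trace_sub, Matrix.trace_add, Matrix.trace_smul, Matrix.trace_one,
    smul_eq_mul, Matrix.trace_mul_comm Q P] at E1
  rw [h1, hpq, hp] at E1
  -- ranks agree
  have hQP : Q.rank = P.rank := by
    have : (Q.rank : ℂ) = (P.rank : ℂ) := hq.symm.trans (hpq.trans hp)
    exact_mod_cast this
  rw [Fintype.card_fin] at E1 E2
  have E1c : ((n:ℂ) - 2*(P.rank:ℂ) + (α:ℂ)^2*(P.rank:ℂ)) = (γ:ℂ)^2*((n:ℂ) - (P.rank:ℂ)) := by
    linear_combination E1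
  have E2c : ((n:ℂ) - 2*(P.rank:ℂ) + (α:ℂ)^4*(P.rank:ℂ))
      = (γ:ℂ)^2*((n:ℂ) - 2*(P.rank:ℂ) + (α:ℂ)^2*(P.rank:ℂ)) := by
    linear_combination E2
  have E1' : ((n:ℝ) - 2*(P.rank:ℝ) + α^2*(P.rank:ℝ)) = γ^2*((n:ℝ) - (P.rank:ℝ)) := by
    exact_mod_cast E1c
  have E2' : ((n:ℝ) - 2*(P.rank:ℝ) + α^4*(P.rank:ℝ))
      = γ^2*((n:ℝ) - 2*(P.rank:ℝ) + α^2*(P.rank:ℝ)) := by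
    exact_mod_cast E2c
  suffices h : 2 * P.rank = n by exact ⟨h, by rw [hQP]; exact h⟩
  have hγ2 : γ^2 < 1 := by nlinarith
  rcases Nat.eq_zero_or_pos P.rank with h0 | hpos
  · rw [h0] at E1'
    have hn : (n:ℝ) = 0 := by push_cast at E1'; nlinarith
    have : n = 0 := by exact_mod_cast hn
    simp [h0, this]
  · have hr1 : 0 < (P.rank : ℝ) * (1 - α^2) := by
      have h0r : 0 < (P.rank : ℝ) := by exact_mod_cast hpos
      exact mul_pos h0r (by nlinarith : (0:ℝ) < 1 - α^2)
    have hcc : α^2 * ((P.rank:ℝ) * (1 - α^2)) = γ^2 * ((P.rank:ℝ) * (1 - α^2)) := by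
      linear_combination E1' - E2'
    have hag : α^2 = γ^2 := mul_right_cancel₀ hr1.ne' hcc
    have : 2*((P.rank:ℝ)) = (n:ℝ) := by
      have key1 : ((n:ℝ) - P.rank)*(1-γ^2) = (P.rank:ℝ)*(1-α^2) := by linear_combination E1'
      rw [hag] at hr1
      have h2 : ((n:ℝ) - P.rank)*(1-γ^2) = (P.rank:ℝ)*(1-γ^2) := by rw [key1, hag]
      have := mul_right_cancel₀ (by nlinarith : (1-γ^2) ≠ 0) h2
      linarith
    exact_mod_cast this
end

section
/- Let A, B be d×d complex matrices, each a nonzero scalar multiple of a unitary. The projections onto the graphs {(x,Ax)} and {(x,Bx)} together with their complements form a strongly equiangular pair if and only if I + A†B is a nonzero scalar multiple of a unitary matrix. -/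
/-!
Write `G_A = [1; A]` and `H_A = [-Aᴴ; 1]`. When `A Aᴴ = r²·1`, both have orthogonal columns of
squared length `1 + r²`, `P_A = G_A G_Aᴴ / (1 + r²)` and `1 - P_A = H_A H_Aᴴ / (1 + r²)`.
For such "scaled isometries" `G, H`, cancelling `G` on both sides turns `P_G P_H P_G = c P_G`
into `(Gᴴ H)(Gᴴ H)ᴴ = c a b`; here `G_Aᴴ G_B = 1 + AᴴB` and `H_Aᴴ H_B = 1 + ABᴴ`.
Finally `1 + ABᴴ` is `A (1 + AᴴB)ᴴ A⁻¹`, and conjugation by a scaled unitary preserves being a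
scaled unitary, so the complementary condition follows from the first one.
-/

open Matrix

section ScaledIsometry

variable {K : Type*} [Field K] [StarRing K] {m n : Type*} [Fintype m] [Fintype n] [DecidableEq n]

lemma conjTranspose_mul_self_eq_smul_one {M : Matrix n n K} {t : K} (ht : t ≠ 0)
    (h : M * Mᴴ = t • 1) : Mᴴ * M = t • 1 := by
  have hinv : M * (t⁻¹ • Mᴴ) = 1 := by
    rw [Matrix.mul_smul, h, smul_smul, inv_mul_cancel₀ ht, one_smul]
  calc Mᴴ * M = t • ((t⁻¹ • Mᴴ) * M) := by
        rw [Matrix.smul_mul, smul_smul, mul_inv_cancel₀ ht, one_smul]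
    _ = t • 1 := by rw [mul_eq_one_comm.mp hinv]

lemma conj_injective_of_conjTranspose_mul_self {G : Matrix m n K} {a : K} (ha : a ≠ 0)
    (hG : Gᴴ * G = a • 1) : Function.Injective fun X : Matrix n n K => G * X * Gᴴ := by
  have hback : ∀ X : Matrix n n K, Gᴴ * (G * X * Gᴴ) * G = (a * a) • X := fun X => by
    calc Gᴴ * (G * X * Gᴴ) * G = (Gᴴ * G) * X * (Gᴴ * G) := by simp only [Matrix.mul_assoc]
      _ = (a * a) • X := by
        rw [hG, Matrix.smul_mul, Matrix.one_mul, Matrix.smul_mul, Matrix.mul_smul,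
          Matrix.mul_one, smul_smul]
  intro X Y hXY
  apply smul_right_injective _ (mul_ne_zero ha ha)
  simp only [← hback, hXY]

lemma conj_mul_conjTranspose_conj {G : Matrix m n K} {a : K} (hG : Gᴴ * G = a • 1)
    {N : Matrix n n K} {t : K} (hN : N * Nᴴ = t • 1) :
    (G * N * Gᴴ) * (G * N * Gᴴ)ᴴ = (a * t) • (G * Gᴴ) := by
  calc (G * N * Gᴴ) * (G * N * Gᴴ)ᴴ = G * N * (Gᴴ * G) * Nᴴ * Gᴴ := by
        simp only [conjTranspose_mul, conjTranspose_conjTranspose, Matrix.mul_assoc]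
    _ = (a * t) • (G * Gᴴ) := by
        rw [hG, Matrix.mul_smul, Matrix.mul_one, Matrix.smul_mul, Matrix.smul_mul,
          Matrix.mul_assoc G, hN, Matrix.mul_smul, Matrix.mul_one, Matrix.smul_mul, smul_smul]

/-- When `Gᴴ G = a • 1`, the orthogonal projection onto the column space of `G`. -/
def rangeProj (G : Matrix m n K) (a : K) : Matrix m m K := a⁻¹ • (G * Gᴴ)

def IsEquiangularPair (P Q : Matrix m m K) (c : K) : Prop :=
  P * Q * P = c • P ∧ Q * P * Q = c • Q

omit [Fintype m] [DecidableEq n] in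
lemma one_sub_rangeProj [DecidableEq m] {G H : Matrix m n K} {a : K} (ha : a ≠ 0)
    (hGH : G * Gᴴ + H * Hᴴ = a • 1) : 1 - rangeProj G a = rangeProj H a := by
  rw [rangeProj, rangeProj, sub_eq_iff_eq_add, ← smul_add, add_comm, hGH, smul_smul,
    inv_mul_cancel₀ ha, one_smul]

lemma rangeProj_mul_rangeProj_mul_rangeProj_eq_smul_iff {G H : Matrix m n K} {a b : K}
    (ha : a ≠ 0) (hb : b ≠ 0) (hG : Gᴴ * G = a • 1) (c : K) :
    rangeProj G a * rangeProj H b * rangeProj G a = c • rangeProj G a ↔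
      (Gᴴ * H) * (Gᴴ * H)ᴴ = (c * a * b) • 1 := by
  have hs : a⁻¹ * b⁻¹ * a⁻¹ ≠ 0 := by simp [ha, hb]
  have hlhs : rangeProj G a * rangeProj H b * rangeProj G a
      = (a⁻¹ * b⁻¹ * a⁻¹) • (G * ((Gᴴ * H) * (Gᴴ * H)ᴴ) * Gᴴ) := by
    simp only [rangeProj, conjTranspose_mul, conjTranspose_conjTranspose, Matrix.smul_mul,
      Matrix.mul_smul, smul_smul, Matrix.mul_assoc, mul_assoc]
  have hrhs : c • rangeProj G a
      = (a⁻¹ * b⁻¹ * a⁻¹) • (G * ((c * a * b) • (1 : Matrix n n K)) * Gᴴ) := by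
    rw [rangeProj, Matrix.mul_smul, Matrix.mul_one, Matrix.smul_mul, smul_smul, smul_smul]
    congr 1
    field_simp
  rw [hlhs, hrhs, (smul_right_injective _ hs).eq_iff,
    (conj_injective_of_conjTranspose_mul_self ha hG).eq_iff]

lemma isEquiangularPair_rangeProj_iff {G H : Matrix m n K} {a b c : K} (ha : a ≠ 0)
    (hb : b ≠ 0) (hc : c ≠ 0) (hG : Gᴴ * G = a • 1) (hH : Hᴴ * H = b • 1) :
    IsEquiangularPair (rangeProj G a) (rangeProj H b) c ↔
      (Gᴴ * H) * (Gᴴ * H)ᴴ = (c * a * b) • 1 := by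
  have hflip : (Hᴴ * G) * (Hᴴ * G)ᴴ = (Gᴴ * H)ᴴ * (Gᴴ * H) := by
    simp only [conjTranspose_mul, conjTranspose_conjTranspose]
  rw [IsEquiangularPair, rangeProj_mul_rangeProj_mul_rangeProj_eq_smul_iff ha hb hG,
    rangeProj_mul_rangeProj_mul_rangeProj_eq_smul_iff hb ha hH, hflip,
    show c * b * a = c * a * b by ring]
  exact ⟨And.left, fun h => ⟨h, conjTranspose_mul_self_eq_smul_one (by simp [*]) h⟩⟩

lemma one_add_mul_conjTranspose_of_one_add_conjTranspose_mul {A B : Matrix n n K} {r t : K}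
    (hr : r ≠ 0) (hr' : IsSelfAdjoint r) (ht : t ≠ 0) (hA : A * Aᴴ = r • 1)
    (h : (1 + Aᴴ * B) * (1 + Aᴴ * B)ᴴ = t • 1) :
    (1 + A * Bᴴ) * (1 + A * Bᴴ)ᴴ = t • 1 := by
  have hA' : Aᴴ * A = r • 1 := conjTranspose_mul_self_eq_smul_one hr hA
  have hconj : A * (1 + Aᴴ * B)ᴴ * Aᴴ = r • (1 + A * Bᴴ) := by
    have : A * (1 + Bᴴ * A) * Aᴴ = A * Aᴴ + A * Bᴴ * (A * Aᴴ) := by noncomm_ring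
    simp only [conjTranspose_add, conjTranspose_one, conjTranspose_mul,
      conjTranspose_conjTranspose]
    rw [this, hA, Matrix.mul_smul, Matrix.mul_one, smul_add]
  have hM : (1 + Aᴴ * B)ᴴ * (1 + Aᴴ * B)ᴴᴴ = t • 1 := by
    rw [conjTranspose_conjTranspose]; exact conjTranspose_mul_self_eq_smul_one ht h
  have key := conj_mul_conjTranspose_conj hA' hM
  rw [hconj, hA, conjTranspose_smul, Matrix.smul_mul, Matrix.mul_smul, hr'.star_eq,
    smul_smul] at key
  refine smul_right_injective _ (mul_ne_zero hr hr) ?_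
  change (r * r) • _ = (r * r) • (t • (1 : Matrix n n K))
  rw [key, smul_smul, smul_smul, mul_right_comm]

end ScaledIsometry

section Graph

variable {K : Type*} [Field K] [StarRing K] {n : Type*} [Fintype n] [DecidableEq n]

/-- Its columns span the graph `{(x, A x)}`. -/
def graphMatrix (A : Matrix n n K) : Matrix (n ⊕ n) n K := fromRows 1 A

/-- Its columns span the orthogonal complement `{(-Aᴴ y, y)}` of the graph of `A`. -/
def graphComplMatrix (A : Matrix n n K) : Matrix (n ⊕ n) n K := fromRows (-Aᴴ) 1

lemma conjTranspose_graphMatrix_mul (A B : Matrix n n K) :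
    (graphMatrix A)ᴴ * graphMatrix B = 1 + Aᴴ * B := by
  rw [graphMatrix, graphMatrix, conjTranspose_fromRows_eq_fromCols_conjTranspose,
    conjTranspose_one, fromCols_mul_fromRows, Matrix.one_mul]

lemma conjTranspose_graphComplMatrix_mul (A B : Matrix n n K) :
    (graphComplMatrix A)ᴴ * graphComplMatrix B = 1 + A * Bᴴ := by
  rw [graphComplMatrix, graphComplMatrix, conjTranspose_fromRows_eq_fromCols_conjTranspose,
    conjTranspose_neg, conjTranspose_conjTranspose, conjTranspose_one, fromCols_mul_fromRows,
    Matrix.mul_one, Matrix.neg_mul, Matrix.mul_neg, neg_neg, add_comm]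

lemma graphMatrix_mul_conjTranspose (A : Matrix n n K) :
    graphMatrix A * (graphMatrix A)ᴴ = fromBlocks 1 Aᴴ A (A * Aᴴ) := by
  rw [graphMatrix, conjTranspose_fromRows_eq_fromCols_conjTranspose, conjTranspose_one,
    fromRows_mul_fromCols, Matrix.one_mul, Matrix.one_mul, Matrix.mul_one]

lemma graphComplMatrix_mul_conjTranspose (A : Matrix n n K) :
    graphComplMatrix A * (graphComplMatrix A)ᴴ = fromBlocks (Aᴴ * A) (-Aᴴ) (-A) 1 := by
  rw [graphComplMatrix, conjTranspose_fromRows_eq_fromCols_conjTranspose, conjTranspose_neg,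
    conjTranspose_conjTranspose, conjTranspose_one, fromRows_mul_fromCols, Matrix.one_mul,
    Matrix.one_mul, Matrix.mul_one, Matrix.neg_mul, Matrix.mul_neg, neg_neg]

lemma conjTranspose_graphMatrix_mul_self {A : Matrix n n K} {r : K} (hA' : Aᴴ * A = r • 1) :
    (graphMatrix A)ᴴ * graphMatrix A = (1 + r) • 1 := by
  rw [conjTranspose_graphMatrix_mul, hA', add_smul, one_smul]

lemma conjTranspose_graphComplMatrix_mul_self {A : Matrix n n K} {r : K}
    (hA : A * Aᴴ = r • 1) : (graphComplMatrix A)ᴴ * graphComplMatrix A = (1 + r) • 1 := by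
  rw [conjTranspose_graphComplMatrix_mul, hA, add_smul, one_smul]

lemma rangeProj_graphMatrix {A : Matrix n n K} {r : K} (hA : A * Aᴴ = r • 1) :
    rangeProj (graphMatrix A) (1 + r) = fromBlocks ((1 + r)⁻¹ • 1) ((1 + r)⁻¹ • Aᴴ)
      ((1 + r)⁻¹ • A) ((r * (1 + r)⁻¹) • 1) := by
  rw [rangeProj, graphMatrix_mul_conjTranspose, hA, fromBlocks_smul, smul_smul, mul_comm]

lemma one_sub_rangeProj_graphMatrix {A : Matrix n n K} {r : K} (hr : 1 + r ≠ 0)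
    (hA : A * Aᴴ = r • 1) (hA' : Aᴴ * A = r • 1) :
    1 - rangeProj (graphMatrix A) (1 + r) = rangeProj (graphComplMatrix A) (1 + r) := by
  refine one_sub_rangeProj hr ?_
  rw [graphMatrix_mul_conjTranspose, graphComplMatrix_mul_conjTranspose, fromBlocks_add, hA,
    hA', ← fromBlocks_one, fromBlocks_smul, add_neg_cancel, add_neg_cancel, smul_zero,
    add_smul, one_smul, add_comm 1 (r • 1)]

end Graph

lemma exists_pos_sq_mul_iff {x : ℝ} (hx : 0 < x) (p : ℂ → Prop) :
    (∃ α : ℝ, 0 < α ∧ p ((α : ℂ) ^ 2 * x)) ↔ ∃ s : ℝ, 0 < s ∧ p ((s : ℂ) ^ 2) := by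
  have hsq : ((√x : ℝ) : ℂ) ^ 2 = x := by rw [← Complex.ofReal_pow, Real.sq_sqrt hx.le]
  constructor
  · rintro ⟨α, hα, h⟩
    exact ⟨α * √x, by positivity, by rwa [Complex.ofReal_mul, mul_pow, hsq]⟩
  · rintro ⟨s, hs, h⟩
    refine ⟨s / √x, by positivity, ?_⟩
    have hx' : (x : ℂ) ≠ 0 := by exact_mod_cast hx.ne'
    rwa [Complex.ofReal_div, div_pow, hsq, div_mul_cancel₀ _ hx']

lemma exists_isEquiangularPair_rangeProj_iff {m n : Type*} [Fintype m] [Fintype n]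
    [DecidableEq n] {G H : Matrix m n ℂ} {a b : ℝ} (ha : 0 < a) (hb : 0 < b)
    (hG : Gᴴ * G = (a : ℂ) • 1) (hH : Hᴴ * H = (b : ℂ) • 1) :
    (∃ α : ℝ, 0 < α ∧ IsEquiangularPair (rangeProj G a) (rangeProj H b) ((α : ℂ) ^ 2)) ↔
      ∃ s : ℝ, 0 < s ∧ (Gᴴ * H) * (Gᴴ * H)ᴴ = ((s : ℂ) ^ 2) • 1 := by
  refine (exists_congr fun α => and_congr_right fun hα => ?_).trans
    (exists_pos_sq_mul_iff (mul_pos ha hb) fun z => (Gᴴ * H) * (Gᴴ * H)ᴴ = z • 1)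
  rw [isEquiangularPair_rangeProj_iff (by exact_mod_cast ha.ne') (by exact_mod_cast hb.ne')
    (by exact_mod_cast (pow_pos hα 2).ne') hG hH, Complex.ofReal_mul, mul_assoc]

/-- For `d×d` matrices `A, B`, each a nonzero scalar multiple of a unitary, the
orthogonal projections onto the graph subspaces `{(x,Ax)}` and `{(x,Bx)}` of `ℂ^{2d}`
form a strongly equiangular pair (they and their complements are equiangular, with
nonzero scalars) if and only if `I + AᴴB` is a nonzero scalar multiple of a unitary. -/
theorem stmt_11 {d : ℕ} (A B : Matrix (Fin d) (Fin d) ℂ)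
    (rA rB : ℝ) (hrA : 0 < rA) (hrB : 0 < rB)
    (hA : A * Aᴴ = ((rA : ℂ)^2) • 1) (hB : B * Bᴴ = ((rB : ℂ)^2) • 1)
    (PA PB : Matrix (Fin d ⊕ Fin d) (Fin d ⊕ Fin d) ℂ)
    (hPA : PA = Matrix.fromBlocks
      ((1 + (rA : ℂ)^2)⁻¹ • 1) ((1 + (rA : ℂ)^2)⁻¹ • Aᴴ)
      ((1 + (rA : ℂ)^2)⁻¹ • A) (((rA : ℂ)^2 * (1 + (rA : ℂ)^2)⁻¹) • 1))
    (hPB : PB = Matrix.fromBlocks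
      ((1 + (rB : ℂ)^2)⁻¹ • 1) ((1 + (rB : ℂ)^2)⁻¹ • Bᴴ)
      ((1 + (rB : ℂ)^2)⁻¹ • B) (((rB : ℂ)^2 * (1 + (rB : ℂ)^2)⁻¹) • 1)) :
    ((∃ α : ℝ, 0 < α ∧
        PA * PB * PA = ((α : ℂ)^2) • PA ∧ PB * PA * PB = ((α : ℂ)^2) • PB) ∧
     (∃ γ : ℝ, 0 < γ ∧
        (1 - PA) * (1 - PB) * (1 - PA) = ((γ : ℂ)^2) • (1 - PA) ∧
        (1 - PB) * (1 - PA) * (1 - PB) = ((γ : ℂ)^2) • (1 - PB))) ↔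
    (∃ s : ℝ, 0 < s ∧
      (1 + Aᴴ * B) * (1 + Aᴴ * B)ᴴ = ((s : ℂ)^2) • 1) := by
  have hrA2 : (rA : ℂ) ^ 2 ≠ 0 := by exact_mod_cast (pow_pos hrA 2).ne'
  have hrB2 : (rB : ℂ) ^ 2 ≠ 0 := by exact_mod_cast (pow_pos hrB 2).ne'
  have hA' := conjTranspose_mul_self_eq_smul_one hrA2 hA
  have hB' := conjTranspose_mul_self_eq_smul_one hrB2 hB
  have hcastA : 1 + (rA : ℂ) ^ 2 = ((1 + rA ^ 2 : ℝ) : ℂ) := by push_cast; rfl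
  have hcastB : 1 + (rB : ℂ) ^ 2 = ((1 + rB ^ 2 : ℝ) : ℂ) := by push_cast; rfl
  have haR : (0 : ℝ) < 1 + rA ^ 2 := by positivity
  have hbR : (0 : ℝ) < 1 + rB ^ 2 := by positivity
  have ha : 1 + (rA : ℂ) ^ 2 ≠ 0 := by rw [hcastA]; exact_mod_cast haR.ne'
  have hb : 1 + (rB : ℂ) ^ 2 ≠ 0 := by rw [hcastB]; exact_mod_cast hbR.ne'
  show ((∃ α : ℝ, 0 < α ∧ IsEquiangularPair PA PB ((α : ℂ) ^ 2)) ∧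
    ∃ γ : ℝ, 0 < γ ∧ IsEquiangularPair (1 - PA) (1 - PB) ((γ : ℂ) ^ 2)) ↔ _
  rw [hPA, hPB, ← rangeProj_graphMatrix hA, ← rangeProj_graphMatrix hB,
    one_sub_rangeProj_graphMatrix ha hA hA', one_sub_rangeProj_graphMatrix hb hB hB',
    hcastA, hcastB, exists_isEquiangularPair_rangeProj_iff haR hbR
      (by rw [← hcastA]; exact conjTranspose_graphMatrix_mul_self hA')
      (by rw [← hcastB]; exact conjTranspose_graphMatrix_mul_self hB'),
    exists_isEquiangularPair_rangeProj_iff haR hbR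
      (by rw [← hcastA]; exact conjTranspose_graphComplMatrix_mul_self hA)
      (by rw [← hcastB]; exact conjTranspose_graphComplMatrix_mul_self hB),
    conjTranspose_graphMatrix_mul, conjTranspose_graphComplMatrix_mul]
  exact and_iff_left_of_imp fun ⟨s, hs, h⟩ => ⟨s, hs,
    one_add_mul_conjTranspose_of_one_add_conjTranspose_mul hrA2
      (IsSelfAdjoint.pow (show IsSelfAdjoint (rA : ℂ) from Complex.conj_ofReal rA) 2)
      (by exact_mod_cast (pow_pos hs 2).ne') hA h⟩
end

section
/- Let E₀,…,E₇ be the 8×8 real matrices representing left multiplication by the octonion units e₀,…,e₇. The 28 matrices Eᵢ†Eⱼ for 0 ≤ i < j ≤ 7 are linearly independent skew-symmetric matrices and hence span the Lie algebra so(8). -/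
open Matrix

/-- The 8×8 real matrix representing left multiplication by the octonion
`a = Σᵢ aᵢ eᵢ` (standard multiplication table, all columns but the first negated). -/
def octRep (a : Fin 8 → ℝ) : Matrix (Fin 8) (Fin 8) ℝ :=
  !![a 0, -a 1, -a 2, -a 3, -a 4, -a 5, -a 6, -a 7;
     a 1,  a 0, -a 3,  a 2, -a 5,  a 4,  a 7, -a 6;
     a 2,  a 3,  a 0, -a 1, -a 6, -a 7,  a 4,  a 5;
     a 3, -a 2,  a 1,  a 0, -a 7,  a 6, -a 5,  a 4;
     a 4,  a 5,  a 6,  a 7,  a 0, -a 1, -a 2, -a 3;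
     a 5, -a 4,  a 7, -a 6,  a 1,  a 0,  a 3, -a 2;
     a 6, -a 7, -a 4,  a 5,  a 2, -a 3,  a 0,  a 1;
     a 7,  a 6, -a 5, -a 4,  a 3,  a 2, -a 1,  a 0]

/-- The unit octonion left-multiplication matrix `Eᵢ = octRep eᵢ`. -/
def octE (i : Fin 8) : Matrix (Fin 8) (Fin 8) ℝ :=
  octRep (fun j => if j = i then 1 else 0)

-- ## Integer-level versions, for decidable computation

def zRep (a : Fin 8 → ℤ) : Matrix (Fin 8) (Fin 8) ℤ :=
  !![a 0, -a 1, -a 2, -a 3, -a 4, -a 5, -a 6, -a 7;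
     a 1,  a 0, -a 3,  a 2, -a 5,  a 4,  a 7, -a 6;
     a 2,  a 3,  a 0, -a 1, -a 6, -a 7,  a 4,  a 5;
     a 3, -a 2,  a 1,  a 0, -a 7,  a 6, -a 5,  a 4;
     a 4,  a 5,  a 6,  a 7,  a 0, -a 1, -a 2, -a 3;
     a 5, -a 4,  a 7, -a 6,  a 1,  a 0,  a 3, -a 2;
     a 6, -a 7, -a 4,  a 5,  a 2, -a 3,  a 0,  a 1;
     a 7,  a 6, -a 5, -a 4,  a 3,  a 2, -a 1,  a 0]

def zE (i : Fin 8) : Matrix (Fin 8) (Fin 8) ℤ := zRep (fun j => if j = i then 1 else 0)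

def zF (i j : Fin 8) : Matrix (Fin 8) (Fin 8) ℤ := (zE i)ᵀ * zE j

def zB4 (k l : Fin 8) : Matrix (Fin 8) (Fin 8) ℤ :=
  Matrix.of fun a b => (if l = b ∧ k = a then 4 else 0) - (if l = a ∧ k = b then 4 else 0)

noncomputable def rF (i j : Fin 8) : Matrix (Fin 8) (Fin 8) ℝ := (octE i)ᵀ * octE j

lemma rF_def (i j : Fin 8) : (octE i)ᵀ * octE j = rF i j := rfl

noncomputable def rB (k l : Fin 8) : Matrix (Fin 8) (Fin 8) ℝ :=
  Matrix.of fun a b =>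
    (if l = b ∧ k = a then (1:ℝ) else 0) - (if l = a ∧ k = b then (1:ℝ) else 0)

set_option maxHeartbeats 1000000 in
lemma zRep_map (za : Fin 8 → ℤ) :
    (zRep za).map (Int.cast : ℤ → ℝ) = octRep (fun k => ((za k : ℤ) : ℝ)) := by
  ext a b
  fin_cases a <;> fin_cases b <;> first | rfl | exact Int.cast_neg _

lemma octE_map (i : Fin 8) : octE i = (zE i).map (Int.cast : ℤ → ℝ) := by
  rw [octE, zE, zRep_map]
  funext k
  simp [apply_ite (Int.cast : ℤ → ℝ)]

lemma rF_apply (i j a b : Fin 8) : rF i j a b = ((zF i j a b : ℤ) : ℝ) := by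
  simp only [rF, zF, Matrix.mul_apply, Matrix.transpose_apply, octE_map, Matrix.map_apply]
  push_cast
  rfl

lemma rB_apply (k l a b : Fin 8) : rB k l a b = (4:ℝ)⁻¹ * ((zB4 k l a b : ℤ) : ℝ) := by
  simp only [rB, zB4, Matrix.of_apply]
  split_ifs <;> norm_num

-- ## The heavy decidable facts

lemma zskew : ∀ i j : Fin 8, i < j → (zF i j)ᵀ = -(zF i j) := by decide

set_option maxHeartbeats 4000000 in
lemma zgram : ∀ i j k l : Fin 8, i < j → k < l →
    Matrix.trace ((zF i j)ᵀ * zF k l) = if i = k ∧ j = l then 8 else 0 := by decide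

-- ## The span

noncomputable def SP : Submodule ℝ (Matrix (Fin 8) (Fin 8) ℝ) :=
  Submodule.span ℝ
    (Set.range (fun p : {p : Fin 8 × Fin 8 // p.1 < p.2} =>
      (octE p.val.1)ᵀ * octE p.val.2))

lemma rF_mem (i j : Fin 8) (h : i < j) : rF i j ∈ SP :=
  Submodule.subset_span ⟨⟨(i, j), h⟩, rfl⟩

lemma span_helper (k l i1 j1 i2 j2 i3 j3 i4 j4 : Fin 8) (e1 e2 e3 e4 : ℤ)
    (hc : e1 • zF i1 j1 + e2 • zF i2 j2 + e3 • zF i3 j3 + e4 • zF i4 j4 = zB4 k l)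
    (h1 : i1 < j1) (h2 : i2 < j2) (h3 : i3 < j3) (h4 : i4 < j4) :
    rB k l ∈ SP := by
  have key : rB k l = (4:ℝ)⁻¹ • ((e1:ℝ) • rF i1 j1 + (e2:ℝ) • rF i2 j2 +
      (e3:ℝ) • rF i3 j3 + (e4:ℝ) • rF i4 j4) := by
    ext a b
    have h' : (e1 : ℝ) * ((zF i1 j1 a b : ℤ) : ℝ) + (e2 : ℝ) * ((zF i2 j2 a b : ℤ) : ℝ) +
        (e3 : ℝ) * ((zF i3 j3 a b : ℤ) : ℝ) + (e4 : ℝ) * ((zF i4 j4 a b : ℤ) : ℝ) =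
        ((zB4 k l a b : ℤ) : ℝ) := by
      have h2 := congrFun (congrFun hc a) b
      simp only [Matrix.add_apply, Matrix.smul_apply, smul_eq_mul] at h2
      exact_mod_cast congrArg (Int.cast : ℤ → ℝ) h2
    simp only [Matrix.smul_apply, Matrix.add_apply, smul_eq_mul, rB_apply, rF_apply]
    linear_combination (-(4:ℝ)⁻¹) * h'
  rw [key]
  exact Submodule.smul_mem _ _ (add_mem (add_mem (add_mem
    (Submodule.smul_mem _ _ (rF_mem _ _ h1)) (Submodule.smul_mem _ _ (rF_mem _ _ h2)))
    (Submodule.smul_mem _ _ (rF_mem _ _ h3))) (Submodule.smul_mem _ _ (rF_mem _ _ h4)))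

lemma comb01 : rB 0 1 ∈ SP :=
  span_helper 0 1 0 1 2 3 4 5 6 7 (-1) (1) (1) (-1) (by decide) (by decide) (by decide) (by decide) (by decide)

lemma comb02 : rB 0 2 ∈ SP :=
  span_helper 0 2 0 2 1 3 4 6 5 7 (-1) (-1) (1) (1) (by decide) (by decide) (by decide) (by decide) (by decide)

lemma comb03 : rB 0 3 ∈ SP :=
  span_helper 0 3 0 3 1 2 4 7 5 6 (-1) (1) (1) (-1) (by decide) (by decide) (by decide) (by decide) (by decide)

lemma comb04 : rB 0 4 ∈ SP :=
  span_helper 0 4 0 4 1 5 2 6 3 7 (-1) (-1) (-1) (-1) (by decide) (by decide) (by decide) (by decide) (by decide)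

lemma comb05 : rB 0 5 ∈ SP :=
  span_helper 0 5 0 5 1 4 2 7 3 6 (-1) (1) (-1) (1) (by decide) (by decide) (by decide) (by decide) (by decide)

lemma comb06 : rB 0 6 ∈ SP :=
  span_helper 0 6 0 6 1 7 2 4 3 5 (-1) (1) (1) (-1) (by decide) (by decide) (by decide) (by decide) (by decide)

lemma comb07 : rB 0 7 ∈ SP :=
  span_helper 0 7 0 7 1 6 2 5 3 4 (-1) (-1) (1) (1) (by decide) (by decide) (by decide) (by decide) (by decide)

lemma comb12 : rB 1 2 ∈ SP :=
  span_helper 1 2 0 3 1 2 4 7 5 6 (-1) (1) (-1) (1) (by decide) (by decide) (by decide) (by decide) (by decide)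

lemma comb13 : rB 1 3 ∈ SP :=
  span_helper 1 3 0 2 1 3 4 6 5 7 (1) (1) (1) (1) (by decide) (by decide) (by decide) (by decide) (by decide)

lemma comb14 : rB 1 4 ∈ SP :=
  span_helper 1 4 0 5 1 4 2 7 3 6 (-1) (1) (1) (-1) (by decide) (by decide) (by decide) (by decide) (by decide)

lemma comb15 : rB 1 5 ∈ SP :=
  span_helper 1 5 0 4 1 5 2 6 3 7 (1) (1) (-1) (-1) (by decide) (by decide) (by decide) (by decide) (by decide)

lemma comb16 : rB 1 6 ∈ SP :=
  span_helper 1 6 0 7 1 6 2 5 3 4 (1) (1) (1) (1) (by decide) (by decide) (by decide) (by decide) (by decide)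

lemma comb17 : rB 1 7 ∈ SP :=
  span_helper 1 7 0 6 1 7 2 4 3 5 (-1) (1) (-1) (1) (by decide) (by decide) (by decide) (by decide) (by decide)

lemma comb23 : rB 2 3 ∈ SP :=
  span_helper 2 3 0 1 2 3 4 5 6 7 (-1) (1) (-1) (1) (by decide) (by decide) (by decide) (by decide) (by decide)

lemma comb24 : rB 2 4 ∈ SP :=
  span_helper 2 4 0 6 1 7 2 4 3 5 (-1) (-1) (1) (1) (by decide) (by decide) (by decide) (by decide) (by decide)

lemma comb25 : rB 2 5 ∈ SP :=
  span_helper 2 5 0 7 1 6 2 5 3 4 (-1) (1) (1) (-1) (by decide) (by decide) (by decide) (by decide) (by decide)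

lemma comb26 : rB 2 6 ∈ SP :=
  span_helper 2 6 0 4 1 5 2 6 3 7 (1) (-1) (1) (-1) (by decide) (by decide) (by decide) (by decide) (by decide)

lemma comb27 : rB 2 7 ∈ SP :=
  span_helper 2 7 0 5 1 4 2 7 3 6 (1) (1) (1) (1) (by decide) (by decide) (by decide) (by decide) (by decide)

lemma comb34 : rB 3 4 ∈ SP :=
  span_helper 3 4 0 7 1 6 2 5 3 4 (-1) (1) (-1) (1) (by decide) (by decide) (by decide) (by decide) (by decide)

lemma comb35 : rB 3 5 ∈ SP :=
  span_helper 3 5 0 6 1 7 2 4 3 5 (1) (1) (1) (1) (by decide) (by decide) (by decide) (by decide) (by decide)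

lemma comb36 : rB 3 6 ∈ SP :=
  span_helper 3 6 0 5 1 4 2 7 3 6 (-1) (-1) (1) (1) (by decide) (by decide) (by decide) (by decide) (by decide)

lemma comb37 : rB 3 7 ∈ SP :=
  span_helper 3 7 0 4 1 5 2 6 3 7 (1) (-1) (-1) (1) (by decide) (by decide) (by decide) (by decide) (by decide)

lemma comb45 : rB 4 5 ∈ SP :=
  span_helper 4 5 0 1 2 3 4 5 6 7 (-1) (-1) (1) (1) (by decide) (by decide) (by decide) (by decide) (by decide)

lemma comb46 : rB 4 6 ∈ SP :=
  span_helper 4 6 0 2 1 3 4 6 5 7 (-1) (1) (1) (-1) (by decide) (by decide) (by decide) (by decide) (by decide)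

lemma comb47 : rB 4 7 ∈ SP :=
  span_helper 4 7 0 3 1 2 4 7 5 6 (-1) (-1) (1) (1) (by decide) (by decide) (by decide) (by decide) (by decide)

lemma comb56 : rB 5 6 ∈ SP :=
  span_helper 5 6 0 3 1 2 4 7 5 6 (1) (1) (1) (1) (by decide) (by decide) (by decide) (by decide) (by decide)

lemma comb57 : rB 5 7 ∈ SP :=
  span_helper 5 7 0 2 1 3 4 6 5 7 (-1) (1) (-1) (1) (by decide) (by decide) (by decide) (by decide) (by decide)

lemma comb67 : rB 6 7 ∈ SP :=
  span_helper 6 7 0 1 2 3 4 5 6 7 (1) (1) (1) (1) (by decide) (by decide) (by decide) (by decide) (by decide)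


lemma rB_mem : ∀ k l : Fin 8, k < l → rB k l ∈ SP := by
  intro k l hkl
  fin_cases k <;> fin_cases l <;>
    first
      | exact absurd hkl (by decide)
      | exact comb01
      | exact comb02
      | exact comb03
      | exact comb04
      | exact comb05
      | exact comb06
      | exact comb07
      | exact comb12
      | exact comb13
      | exact comb14
      | exact comb15
      | exact comb16
      | exact comb17
      | exact comb23
      | exact comb24
      | exact comb25
      | exact comb26
      | exact comb27
      | exact comb34
      | exact comb35
      | exact comb36
      | exact comb37
      | exact comb45
      | exact comb46
      | exact comb47
      | exact comb56
      | exact comb57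
      | exact comb67

lemma skew_decomp (M : Matrix (Fin 8) (Fin 8) ℝ) (hM : Mᵀ = -M) :
    M = ∑ k : Fin 8, ∑ l : Fin 8, (if k < l then M k l else 0) • rB k l := by
  have hs : ∀ a b : Fin 8, M b a = -M a b := by
    intro a b
    have := congrFun (congrFun hM a) b
    simpa [Matrix.transpose_apply, Matrix.neg_apply] using this
  ext a b
  simp only [Matrix.sum_apply, Matrix.smul_apply, rB, Matrix.of_apply, smul_eq_mul, mul_sub,
    Finset.sum_sub_distrib, mul_ite, mul_one, mul_zero, ite_and, Finset.sum_ite_eq,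
    Finset.sum_ite_eq', Finset.mem_univ, if_true]
  rcases lt_trichotomy a b with h | h | h
  · simp [h, asymm h]
  · subst h
    have := hs a a
    simp only [lt_irrefl, if_false]
    linarith
  · simp only [asymm h, if_false, h, if_true]
    rw [hs a b]
    ring

/-- The 28 matrices `Eᵢᵀ Eⱼ` for `i < j` are linearly independent skew-symmetric
matrices and hence span the Lie algebra `so(8)` of skew-symmetric `8×8` real
matrices. -/
theorem stmt_16 :
    LinearIndependent ℝ
      (fun p : {p : Fin 8 × Fin 8 // p.1 < p.2} =>
        (octE p.val.1)ᵀ * octE p.val.2) ∧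
    (∀ p : {p : Fin 8 × Fin 8 // p.1 < p.2},
      ((octE p.val.1)ᵀ * octE p.val.2)ᵀ = -((octE p.val.1)ᵀ * octE p.val.2)) ∧
    (∀ M : Matrix (Fin 8) (Fin 8) ℝ, Mᵀ = -M →
      M ∈ Submodule.span ℝ
        (Set.range (fun p : {p : Fin 8 × Fin 8 // p.1 < p.2} =>
          (octE p.val.1)ᵀ * octE p.val.2))) := by
  refine ⟨?_, ?_, ?_⟩
  · -- linear independence via trace orthogonality
    rw [Fintype.linearIndependent_iff]
    intro g hg q
    simp only [rF_def] at hg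
    have hgram : ∀ p : {p : Fin 8 × Fin 8 // p.1 < p.2},
        Matrix.trace ((rF q.val.1 q.val.2)ᵀ * rF p.val.1 p.val.2) =
          if q = p then 8 else 0 := by
      intro p
      have hz := zgram q.val.1 q.val.2 p.val.1 p.val.2 q.property p.property
      have hzz : Matrix.trace ((rF q.val.1 q.val.2)ᵀ * rF p.val.1 p.val.2) =
          ((Matrix.trace ((zF q.val.1 q.val.2)ᵀ * zF p.val.1 p.val.2) : ℤ) : ℝ) := by
        simp only [Matrix.trace, Matrix.diag, Matrix.mul_apply, Matrix.transpose_apply,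
          rF_apply]
        push_cast
        rfl
      rw [hzz, hz, apply_ite (Int.cast : ℤ → ℝ)]
      by_cases hqp : q = p
      · have : q.val.1 = p.val.1 ∧ q.val.2 = p.val.2 := by
          rw [hqp]; exact ⟨rfl, rfl⟩
        rw [if_pos this, if_pos hqp]; norm_num
      · have : ¬(q.val.1 = p.val.1 ∧ q.val.2 = p.val.2) := by
          intro hh
          exact hqp (Subtype.ext (Prod.ext hh.1 hh.2))
        rw [if_neg this, if_neg hqp]; norm_num
    have h8 : (8 : ℝ) * g q = 0 := by
      have hT : Matrix.trace ((rF q.val.1 q.val.2)ᵀ *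
          (∑ p : {p : Fin 8 × Fin 8 // p.1 < p.2}, g p • rF p.val.1 p.val.2)) = 0 := by
        rw [hg, Matrix.mul_zero, Matrix.trace_zero]
      rw [Matrix.mul_sum] at hT
      rw [Matrix.trace_sum] at hT
      rw [Finset.sum_congr rfl (fun p _ => by
        rw [Matrix.mul_smul, Matrix.trace_smul, smul_eq_mul, hgram p])] at hT
      rw [Finset.sum_congr rfl (fun p _ => (by by_cases h : q = p <;> simp [h] <;> ring :
        g p * (if q = p then (8:ℝ) else 0) = if q = p then (8:ℝ) * g p else 0))] at hT
      rw [Finset.sum_ite_eq Finset.univ q (fun p => (8:ℝ) * g p)] at hT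
      simpa using hT
    linarith
  · rintro ⟨⟨i, j⟩, hij⟩
    show (rF i j)ᵀ = -(rF i j)
    have hz := zskew i j hij
    ext a b
    have hz' := congrFun (congrFun hz b) a
    simp only [Matrix.transpose_apply, Matrix.neg_apply] at hz' ⊢
    rw [rF_apply, rF_apply]
    have hc := congrArg (Int.cast : ℤ → ℝ) hz'
    push_cast at hc
    linarith [hc]
  · intro M hM
    show M ∈ SP
    rw [skew_decomp M hM]
    refine Submodule.sum_mem _ fun k _ => Submodule.sum_mem _ fun l _ => ?_
    split_ifs with h
    · exact Submodule.smul_mem _ _ (rB_mem k l h)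
    · simp only [zero_smul]
      exact Submodule.zero_mem _
end
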